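/- Orientation preservation: if the material parameters satisfy 1 + ι²/β² < η² (equivalently β(β²η² − ι²)^{−1/2} < 1), then for every (m,n) ∈ ℝ³ × ℝ³ the dilatation strain v₃ of (u,v) = F(m,n) is strictly positive. -/
import Mathlib


/-- The complementary quadratic form `Q*(m,n)`. -/
noncomputable def Qstar (α β ζ η ι : ℝ) (m n : Fin 3 → ℝ) : ℝ :=
  (m 0 ^ 2 + m 1 ^ 2) / α ^ 2 + (n 0 ^ 2 + n 1 ^ 2) / ζ ^ 2
    + (η ^ 2 * m 2 ^ 2 + β ^ 2 * n 2 ^ 2 - 2 * ι * m 2 * n 2) / (β ^ 2 * η ^ 2 - ι ^ 2)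

/-- The forward constitutive map `F : (m,n) ↦ (u,v)`, with
`λ = (γ^p + Q*(m,n)^{p/2})^{−1/p}`. -/
noncomputable def Fmap (p α β γ ζ η ι : ℝ) (m n : Fin 3 → ℝ) :
    (Fin 3 → ℝ) × (Fin 3 → ℝ) :=
  let lam : ℝ := (γ ^ p + (Qstar α β ζ η ι m n) ^ (p / 2)) ^ (-(1 / p))
  (![lam * m 0 / α ^ 2, lam * m 1 / α ^ 2,
      lam * (η ^ 2 * m 2 - ι * n 2) / (β ^ 2 * η ^ 2 - ι ^ 2)],
   ![lam * n 0 / ζ ^ 2, lam * n 1 / ζ ^ 2,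
      1 + lam * (β ^ 2 * n 2 - ι * m 2) / (β ^ 2 * η ^ 2 - ι ^ 2)])

/-- orientation preservation: if `1 + ι²/β² < η²` then the dilatation
strain `v₃` of `(u,v) = F(m,n)` is strictly positive for every `(m,n)`. -/
theorem orientation_preservation (p α β γ ζ η ι : ℝ) (hp : 0 < p) (hα : 0 < α)
    (hβ : 0 < β) (hγ : 0 < γ) (hζ : 0 < ζ) (hη : 0 < η)
    (hβηι : 0 < β ^ 2 * η ^ 2 - ι ^ 2) (hmat : 1 + ι ^ 2 / β ^ 2 < η ^ 2) :
    ∀ m n : Fin 3 → ℝ, 0 < (Fmap p α β γ ζ η ι m n).2 2 := by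
  intro m n
  have hβ2 : (0:ℝ) < β ^ 2 := by positivity
  obtain ⟨hι2, hι1⟩ : -(β * η) < ι ∧ ι < β * η :=
    abs_lt_of_sq_lt_sq' (by nlinarith) (by positivity)
  set D : ℝ := β ^ 2 * η ^ 2 - ι ^ 2 with hDdef
  have hD : 0 < D := hβηι
  have hβD : β ^ 2 < D := by
    have h := mul_lt_mul_of_pos_left hmat hβ2
    have : β ^ 2 * (1 + ι ^ 2 / β ^ 2) = β ^ 2 + ι ^ 2 := by field_simp
    rw [this] at h; simp only [hDdef]; nlinarith
  set t : ℝ := β ^ 2 * n 2 - ι * m 2 with htdef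
  set Qz : ℝ := η ^ 2 * m 2 ^ 2 + β ^ 2 * n 2 ^ 2 - 2 * ι * m 2 * n 2 with hQzdef
  have hQznn : 0 ≤ Qz := by
    nlinarith [mul_nonneg (by linarith : (0:ℝ) ≤ β * η - ι) (sq_nonneg (η * m 2 + β * n 2)),
      mul_nonneg (by linarith : (0:ℝ) ≤ β * η + ι) (sq_nonneg (η * m 2 - β * n 2)),
      mul_pos hβ hη]
  have ht2 : t ^ 2 ≤ β ^ 2 * Qz := by
    have : β ^ 2 * Qz - t ^ 2 = D * m 2 ^ 2 := by simp only [htdef, hQzdef, hDdef]; ring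
    nlinarith [sq_nonneg (m 2)]
  set Q : ℝ := Qstar α β ζ η ι m n with hQdef
  have hQlb : Qz / D ≤ Q := by
    have h1 : (0:ℝ) ≤ (m 0 ^ 2 + m 1 ^ 2) / α ^ 2 := by positivity
    have h2 : (0:ℝ) ≤ (n 0 ^ 2 + n 1 ^ 2) / ζ ^ 2 := by positivity
    simp only [hQdef, Qstar, ← hDdef, ← hQzdef]
    linarith
  have hQnn : 0 ≤ Q := le_trans (by positivity) hQlb
  set lam : ℝ := (γ ^ p + Q ^ (p / 2)) ^ (-(1 / p)) with hlamdef
  have hSpos : 0 < γ ^ p + Q ^ (p / 2) := by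
    have := Real.rpow_pos_of_pos hγ p
    have := Real.rpow_nonneg hQnn (p / 2)
    linarith
  have hlampos : 0 < lam := Real.rpow_pos_of_pos hSpos _
  have hgoal : 0 < 1 + lam * t / D := by
    rcases eq_or_ne t 0 with ht0 | ht0
    · rw [ht0]; simp
    · have hQzpos : 0 < Qz := by
        rcases hQznn.lt_or_eq with h | h
        · exact h
        · exfalso; apply ht0
          have h1 : t ^ 2 ≤ 0 := by rw [← h, mul_zero] at ht2; exact ht2
          exact pow_eq_zero_iff (n := 2) (by norm_num) |>.mp
            (le_antisymm h1 (sq_nonneg t))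
      have hQpos : 0 < Q := lt_of_lt_of_le (by positivity) hQlb
      -- lam ≤ Q ^ (-(1/2))
      have hkey : lam ≤ Q ^ (-(1/2) : ℝ) := by
        have h1 : Q ^ (-(1/2) : ℝ) = (Q ^ (p / 2)) ^ (-(1 / p)) := by
          rw [← Real.rpow_mul hQnn]
          congr 1
          field_simp
        rw [h1, hlamdef]
        exact Real.rpow_le_rpow_of_nonpos (Real.rpow_pos_of_pos hQpos _)
          (by nlinarith [Real.rpow_pos_of_pos hγ p])
          (neg_nonpos.mpr (by positivity))
      have hlamsq : lam ^ 2 ≤ Q⁻¹ := by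
        have h2 : (Q ^ (-(1/2) : ℝ)) ^ 2 = Q⁻¹ := by
          rw [← Real.rpow_natCast (Q ^ (-(1/2):ℝ)) 2, ← Real.rpow_mul hQnn]
          norm_num [Real.rpow_neg_one]
        calc lam ^ 2 ≤ (Q ^ (-(1/2) : ℝ)) ^ 2 := by
              apply pow_le_pow_left₀ hlampos.le hkey
          _ = Q⁻¹ := h2
      have hQinv : Q⁻¹ ≤ D / Qz := by
        have h3 : (Qz / D)⁻¹ = D / Qz := by rw [inv_div]
        calc Q⁻¹ ≤ (Qz / D)⁻¹ := by
              apply inv_anti₀ (by positivity) hQlb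
          _ = D / Qz := h3
      have hchain : (lam * t) ^ 2 < D ^ 2 := by
        have e1 : lam ^ 2 * t ^ 2 ≤ (D / Qz) * t ^ 2 :=
          mul_le_mul_of_nonneg_right (le_trans hlamsq hQinv) (sq_nonneg t)
        have e2 : (D / Qz) * t ^ 2 ≤ (D / Qz) * (β ^ 2 * Qz) :=
          mul_le_mul_of_nonneg_left ht2 (by positivity)
        have e3 : (D / Qz) * (β ^ 2 * Qz) = β ^ 2 * D := by
          field_simp
        have e4 : β ^ 2 * D < D ^ 2 := by
          calc β ^ 2 * D < D * D := mul_lt_mul_of_pos_right hβD hD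
            _ = D ^ 2 := (sq D).symm
        calc (lam * t) ^ 2 = lam ^ 2 * t ^ 2 := by ring
          _ ≤ (D / Qz) * t ^ 2 := e1
          _ ≤ (D / Qz) * (β ^ 2 * Qz) := e2
          _ = β ^ 2 * D := e3
          _ < D ^ 2 := e4
      obtain ⟨hneg, -⟩ : -D < lam * t ∧ lam * t < D := abs_lt_of_sq_lt_sq' hchain hD.le
      have : -1 < lam * t / D := by
        rw [neg_lt, ← neg_div, div_lt_one hD]; linarith
      linarith
  show 0 < (Fmap p α β γ ζ η ι m n).2 2
  simp only [Fmap, ← hQdef, ← hlamdef]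
  simpa using hgoal
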